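/- arXiv:1402.3665 — 2 statements merged into one kernel-verified Lean document; each statement's English description precedes it below -/
import Mathlib

section
/- For every integer m ≥ 3 and every index i with 1 ≤ i ≤ m−2, the operators on V^{⊗m} satisfy the braid relation Ř_i Ř_{i+1} Ř_i = Ř_{i+1} Ř_i Ř_{i+1}. -/
/-!
Every operator involved acts as the identity outside the three sites `i - 1, i, i + 1`, so after
splitting `V^{⊗m} = V^{⊗3} ⊗ V^{⊗(m-3)}` all of them have the form `T ⊗ 1`, and the claim reduces
to the braid relation `Ř₁₂ Ř₂₃ Ř₁₂ = Ř₂₃ Ř₁₂ Ř₂₃` on `V^{⊗3}`. There, the row of `Ř` at `v_x ⊗ v_y`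
has its support on `v_x ⊗ v_y` and `v_y ⊗ v_x`, so both sides map the row at `v_x ⊗ v_y ⊗ v_z` to a
combination of rows at permutations of `(x, y, z)` whose coefficients depend only on the relative
order of `x, y, z`; the relation is then checked order type by order type.
-/

open Matrix Kronecker BigOperators

/-- The two-parameter R-matrix `Ř` on `V ⊗ V`, `V = ℂⁿ`, written in the basis
`v_i ⊗ v_j ↔ (i,j)`:
`Ř = Σᵢ Eᵢᵢ⊗Eᵢᵢ + r Σ_{i<j} Eⱼᵢ⊗Eᵢⱼ + s⁻¹ Σ_{i<j} Eᵢⱼ⊗Eⱼᵢ + (1 − r s⁻¹) Σ_{i<j} Eⱼⱼ⊗Eᵢᵢ`. -/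
noncomputable def Rhat (n : ℕ) (r s : ℂ) : Matrix (Fin n × Fin n) (Fin n × Fin n) ℂ :=
  (∑ i : Fin n, single i i (1:ℂ) ⊗ₖ single i i (1:ℂ))
  + r • (∑ i : Fin n, ∑ j : Fin n,
      if i < j then single j i (1:ℂ) ⊗ₖ single i j (1:ℂ) else 0)
  + s⁻¹ • (∑ i : Fin n, ∑ j : Fin n,
      if i < j then single i j (1:ℂ) ⊗ₖ single j i (1:ℂ) else 0)
  + (1 - r * s⁻¹) • (∑ i : Fin n, ∑ j : Fin n,
      if i < j then single j j (1:ℂ) ⊗ₖ single i i (1:ℂ) else 0)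

/-- Given an operator `M` on `V ⊗ V`, the operator on `V^{⊗m}` acting as `M` in the
tensor factors `(a, b)` (with `a ≠ b`) and as the identity in all other factors.
Here `V^{⊗m}` is identified with `(Fin m → Fin n) → ℂ` via the basis
`v_{f 0} ⊗ ⋯ ⊗ v_{f (m-1)} ↔ f`. -/
noncomputable def op2At (n m : ℕ) (M : Matrix (Fin n × Fin n) (Fin n × Fin n) ℂ)
    (a b : Fin m) : Matrix (Fin m → Fin n) (Fin m → Fin n) ℂ :=
  fun f g => M (f a, f b) (g a, g b) *
    ∏ l ∈ Finset.univ \ ({a, b} : Finset (Fin m)), (if f l = g l then (1:ℂ) else 0)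

section ThreeSites

variable {β S : Type*} [Fintype β] [DecidableEq β] [CommSemiring S]

def onFirstTwo (M : Matrix (β × β) (β × β) S) : Matrix (β × β × β) (β × β × β) S :=
  reindex (Equiv.prodAssoc β β β) (Equiv.prodAssoc β β β) (M ⊗ₖ 1)

theorem onFirstTwo_mul_apply {ι : Type*} (M : Matrix (β × β) (β × β) S)
    (A : Matrix (β × β × β) ι S) (x y z : β) (w : ι) :
    (onFirstTwo M * A) (x, y, z) w =
      (M * A.submatrix (fun u : β × β => (u.1, u.2, z)) id) (x, y) w := by
  simp [onFirstTwo, mul_apply, Fintype.sum_prod_type, one_apply]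

theorem one_kronecker_mul_apply {γ ι : Type*} [Fintype γ] (M : Matrix γ γ S)
    (A : Matrix (β × γ) ι S) (x : β) (y : γ) (w : ι) :
    ((1 : Matrix β β S) ⊗ₖ M * A) (x, y) w = (M * A.submatrix (fun u => (x, u)) id) y w := by
  simp [mul_apply, Fintype.sum_prod_type, one_apply]

end ThreeSites

section RMatrix

variable {α R : Type*} [Fintype α] [LinearOrder α] [CommRing R]

def rMatrix (p q : R) : Matrix (α × α) (α × α) R := fun x y =>
  if x.1 = x.2 then (if y = x then 1 else 0)
  else if x.1 < x.2 then (if y = x.swap then q else 0)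
  else (if y = x then 1 - p * q else 0) + (if y = x.swap then p else 0)

theorem rMatrix_mul_apply (p q : R) {ι : Type*} (A : Matrix (α × α) ι R) (x y : α) (w : ι) :
    (rMatrix (α := α) p q * A) (x, y) w =
      if x = y then A (x, y) w
      else if x < y then q * A (y, x) w
      else (1 - p * q) * A (x, y) w + p * A (y, x) w := by
  simp only [mul_apply, rMatrix]
  split_ifs <;> simp [add_mul, ite_mul, Finset.sum_add_distrib]

theorem rMatrix_braid (p q : R) :
    onFirstTwo (rMatrix (α := α) p q) * (1 ⊗ₖ rMatrix p q) * onFirstTwo (rMatrix p q) =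
      (1 ⊗ₖ rMatrix p q) * onFirstTwo (rMatrix p q) * (1 ⊗ₖ rMatrix p q) := by
  -- with a right factor `A`, every product is a left multiplication, expanded row by row below
  suffices h : ∀ A : Matrix (α × α × α) (α × α × α) R,
      onFirstTwo (rMatrix p q) * ((1 ⊗ₖ rMatrix p q) * (onFirstTwo (rMatrix p q) * A)) =
        (1 ⊗ₖ rMatrix p q) * (onFirstTwo (rMatrix p q) * ((1 ⊗ₖ rMatrix p q) * A)) by
    simpa only [mul_assoc, mul_one] using h 1
  intro A
  ext ⟨x, y, z⟩ w
  simp only [onFirstTwo_mul_apply, one_kronecker_mul_apply, rMatrix_mul_apply, submatrix_apply, id]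
  rcases lt_trichotomy x y with hxy | hxy | hxy <;>
    rcases lt_trichotomy y z with hyz | hyz | hyz <;>
    rcases lt_trichotomy x z with hxz | hxz | hxz <;>
    first
    | (exfalso; order)
    | (subst_vars; simp [*, ne_of_lt, LT.lt.ne', not_lt_of_gt] <;> ring)

end RMatrix

theorem Rhat_eq_rMatrix (n : ℕ) (r s : ℂ) : Rhat n r s = rMatrix r s⁻¹ := by
  ext ⟨x, y⟩ ⟨u, v⟩
  simp only [Rhat, Matrix.add_apply, Matrix.smul_apply, Matrix.sum_apply, Matrix.ite_apply,
    Matrix.zero_apply, kroneckerMap_apply, single_apply, ite_zero_mul_ite_zero, ← ite_and, mul_one]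
  -- bring the equations in the summation indices in front of `i < j`, so that the sums collapse
  simp only [and_comm (a := _ < _), and_assoc]
  simp only [ite_and, Finset.sum_ite_eq', Finset.mem_univ, ↓reduceIte, smul_eq_mul, mul_ite,
    mul_one, mul_zero, Finset.sum_ite_irrel, Finset.sum_const_zero, rMatrix, Prod.mk.injEq,
    Prod.swap_prod_mk]
  grind

theorem kronecker_one_submatrix_mul {κ μ ν R : Type*} [Fintype κ] [Fintype μ] [Fintype ν]
    [DecidableEq ν] [CommSemiring R] (e : κ ≃ μ × ν) (A B : Matrix μ μ R) :
    (A ⊗ₖ (1 : Matrix ν ν R)).submatrix e e * (B ⊗ₖ 1).submatrix e e =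
      ((A * B) ⊗ₖ 1).submatrix e e := by
  rw [submatrix_mul_equiv, ← mul_kronecker_mul, one_mul]

def splitAtThree {ι α : Type*} [DecidableEq ι] {a b c : ι} (hab : a ≠ b) (hac : a ≠ c)
    (hbc : b ≠ c) : (ι → α) ≃ (α × α × α) × ({l // l ∉ ({a, b, c} : Finset ι)} → α) where
  toFun f := ((f a, f b, f c), fun l => f l)
  invFun x l :=
    if ha : l = a then x.1.1 else if hb : l = b then x.1.2.1 else if hc : l = c then x.1.2.2
    else x.2 ⟨l, by simp [ha, hb, hc]⟩
  left_inv f := by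
    funext l
    dsimp only
    split_ifs <;> subst_vars <;> rfl
  right_inv x := by
    refine Prod.ext (by simp [hab.symm, hac.symm, hbc.symm]) (funext fun ⟨l, hl⟩ => ?_)
    simp only [Finset.mem_insert, Finset.mem_singleton, not_or] at hl
    simp [hl]

theorem prod_boole_sdiff_eq_one_apply {ι α R : Type*} [Fintype ι] [DecidableEq ι] [DecidableEq α]
    [CommSemiring R] (T : Finset ι) (f g : ι → α) :
    ∏ l ∈ Finset.univ \ T, (if f l = g l then (1 : R) else 0) =
      (1 : Matrix ({l // l ∉ T} → α) ({l // l ∉ T} → α) R) (fun l => f l) (fun l => g l) := by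
  rw [Finset.prod_boole, one_apply]
  congr 1
  simp [funext_iff]

section OnThreeSites

variable {n m : ℕ} (M : Matrix (Fin n × Fin n) (Fin n × Fin n) ℂ) {a b c : Fin m}
  (hab : a ≠ b) (hac : a ≠ c) (hbc : b ≠ c)

theorem op2At_eq_onFirstTwo :
    op2At n m M a b =
      (onFirstTwo M ⊗ₖ 1).submatrix (splitAtThree hab hac hbc) (splitAtThree hab hac hbc) := by
  have hS : Finset.univ \ {a, b} = insert c (Finset.univ \ {a, b, c}) := by
    ext l
    simp only [Finset.mem_sdiff, Finset.mem_univ, Finset.mem_insert, Finset.mem_singleton]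
    grind
  ext f g
  rw [op2At, hS, Finset.prod_insert (by simp), prod_boole_sdiff_eq_one_apply]
  simp [onFirstTwo, splitAtThree, one_apply]

theorem op2At_eq_one_kronecker :
    op2At n m M b c =
      ((1 ⊗ₖ M) ⊗ₖ 1).submatrix (splitAtThree hab hac hbc) (splitAtThree hab hac hbc) := by
  have hS : Finset.univ \ {b, c} = insert a (Finset.univ \ {a, b, c}) := by
    ext l
    simp only [Finset.mem_sdiff, Finset.mem_univ, Finset.mem_insert, Finset.mem_singleton]
    grind
  ext f g
  rw [op2At, hS, Finset.prod_insert (by simp), prod_boole_sdiff_eq_one_apply]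
  simp [splitAtThree, one_apply]

end OnThreeSites

/-- **Braid relation.** For every `m ≥ 3` and `1 ≤ i ≤ m−2`, the operators on `V^{⊗m}`
satisfy `Ř_i Ř_{i+1} Ř_i = Ř_{i+1} Ř_i Ř_{i+1}` (with 1-based indices, `Ř_i` acting in
the factors `(i, i+1)`). -/
theorem braid_relation (n : ℕ) (r s : ℂ)
    (m : ℕ) (i : ℕ) (hi1 : 1 ≤ i) (hi2 : i ≤ m - 2) :
    op2At n m (Rhat n r s) ⟨i - 1, by omega⟩ ⟨i, by omega⟩ *
        op2At n m (Rhat n r s) ⟨i, by omega⟩ ⟨i + 1, by omega⟩ *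
        op2At n m (Rhat n r s) ⟨i - 1, by omega⟩ ⟨i, by omega⟩ =
      op2At n m (Rhat n r s) ⟨i, by omega⟩ ⟨i + 1, by omega⟩ *
        op2At n m (Rhat n r s) ⟨i - 1, by omega⟩ ⟨i, by omega⟩ *
        op2At n m (Rhat n r s) ⟨i, by omega⟩ ⟨i + 1, by omega⟩ := by
  have hab : (⟨i - 1, by omega⟩ : Fin m) ≠ ⟨i, by omega⟩ := by
    simp only [ne_eq, Fin.mk.injEq]; omega
  have hac : (⟨i - 1, by omega⟩ : Fin m) ≠ ⟨i + 1, by omega⟩ := by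
    simp only [ne_eq, Fin.mk.injEq]; omega
  have hbc : (⟨i, by omega⟩ : Fin m) ≠ ⟨i + 1, by omega⟩ := by
    simp only [ne_eq, Fin.mk.injEq]; omega
  rw [op2At_eq_onFirstTwo _ hab hac hbc, op2At_eq_one_kronecker _ hab hac hbc]
  simp only [kronecker_one_submatrix_mul, Rhat_eq_rMatrix, rMatrix_braid]
end

section
/- Assume that r s^{-1} is not a root of unity (i.e., (r/s)^m ≠ 1 for all integers m ≥ 1). For every k ≥ 2, let W_k be the subspace Σ_{i=0}^{k-2} V^{⊗i} ⊗ S²_{r,s}(V) ⊗ V^{⊗(k−i−2)} of V^{⊗k}. Then the quotient space V^{⊗k}/W_k has dimension equal to the binomial coefficient C(n, k). -/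
/-!
Modulo `W_k`, a basis vector `e_f` of `V^{⊗k}` (with `f : Fin k → Fin n`) vanishes when two
adjacent entries of `f` are equal, and equals `-s⁻¹ e_{f'}` when `f p > f (p + 1)`, where `f'`
swaps these entries and has one inversion fewer. Hence the quotient is spanned by the classes of
`e_f` with `f` strictly increasing, i.e. by the `k`-subsets of `Fin n`. These classes are
independent: for a `k`-subset `t`, the functional sending `e_f` to `(-s⁻¹) ^ inv f` if `f` is
injective with range `t`, and to `0` otherwise, kills `W_k` and takes the value `δ_{t t'}` on the
class of the sorted `e_{t'}`.
-/

open BigOperators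

/-- The subspace `S²_{r,s}(V)` of `V ⊗ V`: the span of
`{v_i ⊗ v_i : 1 ≤ i ≤ n} ∪ {v_i ⊗ v_j + s v_j ⊗ v_i : 1 ≤ i < j ≤ n}`. -/
noncomputable def Ssq (n : ℕ) (s : ℂ) : Submodule ℂ ((Fin n × Fin n) → ℂ) :=
  Submodule.span ℂ
    ({ w | ∃ i : Fin n, w = (Pi.single (i, i) (1:ℂ) : (Fin n × Fin n) → ℂ) } ∪
     { w | ∃ i j : Fin n, i < j ∧
        w = (Pi.single (i, j) (1:ℂ) : (Fin n × Fin n) → ℂ)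
            + s • (Pi.single (j, i) (1:ℂ) : (Fin n × Fin n) → ℂ) })

/-- The subspace `W_k = Σ_{i=0}^{k-2} V^{⊗i} ⊗ S²_{r,s}(V) ⊗ V^{⊗(k−i−2)}` of `V^{⊗k}`,
where `V^{⊗k}` is identified with `(Fin k → Fin n) → ℂ` via the basis
`v_{f 0} ⊗ ⋯ ⊗ v_{f (k-1)} ↔ f`: it is the span of all vectors of the form
`(basis vector g on the factors ≠ p, p+1) ⊗ (w ∈ S²_{r,s}(V) in the factors p, p+1)`. -/
noncomputable def Wk (n : ℕ) (s : ℂ) (k : ℕ) : Submodule ℂ ((Fin k → Fin n) → ℂ) :=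
  Submodule.span ℂ
    { v | ∃ p : ℕ, ∃ hp : p + 2 ≤ k, ∃ w ∈ Ssq n s, ∃ g : Fin k → Fin n,
        v = fun f => w (f ⟨p, by omega⟩, f ⟨p + 1, by omega⟩) *
          ∏ l ∈ Finset.univ \ ({⟨p, by omega⟩, ⟨p + 1, by omega⟩} : Finset (Fin k)),
            (if f l = g l then (1:ℂ) else 0) }

open Function Finset

section Inversions

variable {k : ℕ} {α : Type*} [LinearOrder α]

def inversions (f : Fin k → α) : Finset (Fin k × Fin k) :=
  {q | q.1 < q.2 ∧ f q.2 < f q.1}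

lemma inversions_eq_empty {f : Fin k → α} (hf : StrictMono f) : inversions f = ∅ :=
  filter_eq_empty_iff.mpr fun _ _ h => (hf h.1).not_gt h.2

lemma card_inversions_comp_swap (f : Fin k → α) {a b : Fin k} (hab : (b : ℕ) = a + 1)
    (hf : f a < f b) : #(inversions (f ∘ Equiv.swap a b)) = #(inversions f) + 1 := by
  set τ := Equiv.swap a b
  have hτ : ∀ x, τ (τ x) = x := Equiv.swap_apply_self a b
  have hreindex :
      #(inversions (f ∘ τ)) = #{q : Fin k × Fin k | τ q.1 < τ q.2 ∧ f q.2 < f q.1} :=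
    card_nbij' (Prod.map τ τ) (Prod.map τ τ) (fun q => by simp [inversions, hτ])
      (fun q => by simp [inversions, hτ]) (fun q _ => Prod.ext (hτ _) (hτ _))
      (fun q _ => Prod.ext (hτ _) (hτ _))
  -- Swapping adjacent positions reverses the order of the pair `(a, b)` only.
  have hinsert : ({q : Fin k × Fin k | τ q.1 < τ q.2 ∧ f q.2 < f q.1} : Finset _) =
      insert (b, a) (inversions f) := by
    ext ⟨x, y⟩
    simp only [τ, inversions, mem_filter, mem_univ, true_and, mem_insert, Prod.mk.injEq,
      Equiv.swap_apply_def, Fin.lt_def, ← Fin.val_inj]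
    split_ifs <;> grind
  rw [hreindex, hinsert, card_insert_of_notMem]
  simp only [inversions, mem_filter, Fin.lt_def]
  omega

lemma exists_adjacent_le_of_not_strictMono {f : Fin k → α}
    (hf : ¬StrictMono f) : ∃ a b : Fin k, (b : ℕ) = a + 1 ∧ f b ≤ f a := by
  cases k with
  | zero => exact absurd (fun a => a.elim0) hf
  | succ m =>
    simp only [Fin.strictMono_iff_lt_succ, not_forall, not_lt] at hf
    obtain ⟨i, hi⟩ := hf
    exact ⟨i.castSucc, i.succ, rfl, hi⟩

end Inversions

section EmbedPair

variable {R ι α : Type*} [CommSemiring R] [Fintype ι] [DecidableEq ι] [DecidableEq α]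

def embedPair (a b : ι) (g : ι → α) : (α × α → R) →ₗ[R] ((ι → α) → R) where
  toFun w f := w (f a, f b) * ∏ l ∈ univ \ {a, b}, if f l = g l then 1 else 0
  map_add' v w := by funext f; simp [add_mul]
  map_smul' c v := by funext f; simp [mul_assoc]

lemma embedPair_single {a b : ι} (hab : a ≠ b) (g : ι → α) (i j : α) :
    embedPair a b g (Pi.single (i, j) (1 : R)) = Pi.single (update (update g a i) b j) 1 := by
  funext f
  simp only [embedPair, LinearMap.coe_mk, AddHom.coe_mk, Pi.single_apply, prod_boole,
    ite_zero_mul_ite_zero, one_mul]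
  congr 1
  simp only [Prod.mk.injEq, mem_sdiff, mem_univ, mem_insert, mem_singleton, true_and, funext_iff,
    update_apply]
  grind

end EmbedPair

section QuotientBasis

variable {n k : ℕ}

lemma embedPair_mem_Wk {s : ℂ} {a b : Fin k} (hab : (b : ℕ) = a + 1) (g : Fin k → Fin n)
    {w : Fin n × Fin n → ℂ} (hw : w ∈ Ssq n s) : embedPair a b g w ∈ Wk n s k := by
  obtain ⟨p, hp⟩ := a
  obtain ⟨_, hq⟩ := b
  obtain rfl : _ = p + 1 := hab
  exact Submodule.subset_span ⟨p, by omega, w, hw, g, rfl⟩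

lemma Wk_eq_span (s : ℂ) : Wk n s k = Submodule.span ℂ
    ({v | ∃ (f : Fin k → Fin n) (a b : Fin k), (b : ℕ) = a + 1 ∧ f a = f b ∧
        v = Pi.single f 1} ∪
     {v | ∃ (f : Fin k → Fin n) (a b : Fin k), (b : ℕ) = a + 1 ∧ f a < f b ∧
        v = Pi.single f 1 + s • Pi.single (f ∘ Equiv.swap a b) 1}) := by
  apply le_antisymm
  · rw [Wk, Submodule.span_le]
    rintro _ ⟨p, hp, w, hw, g, rfl⟩
    set a : Fin k := ⟨p, by omega⟩
    set b : Fin k := ⟨p + 1, by omega⟩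
    have hab : a ≠ b := by simp [a, b, ← Fin.val_inj]
    show embedPair a b g w ∈ _
    suffices hSsq : Ssq n s ≤ (Submodule.span ℂ _).comap (embedPair a b g) from hSsq hw
    rw [Ssq, Submodule.span_le]
    rintro _ (⟨i, rfl⟩ | ⟨i, j, hij, rfl⟩)
    · refine Submodule.subset_span (Or.inl ⟨_, a, b, rfl, ?_, (embedPair_single hab g i i)⟩)
      simp [hab]
    · refine Submodule.subset_span (Or.inr ⟨update (update g a i) b j, a, b, rfl, ?_, ?_⟩)
      · simpa [hab] using hij
      · rw [map_add, map_smul, embedPair_single hab, embedPair_single hab]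
        congr 3
        funext l
        simp only [comp_apply, Equiv.swap_apply_def, update_apply]
        grind
  · rw [Submodule.span_le]
    have hne {a b : Fin k} (hab : (b : ℕ) = a + 1) : a ≠ b := by simp [← Fin.val_inj, hab]
    rintro _ (⟨f, a, b, hab, heq, rfl⟩ | ⟨f, a, b, hab, hlt, rfl⟩)
    · have := embedPair_mem_Wk (s := s) hab f (Submodule.subset_span (Or.inl ⟨f a, rfl⟩))
      rwa [embedPair_single (hne hab), update_eq_self, heq, update_eq_self] at this
    · have := embedPair_mem_Wk (s := s) hab f (Submodule.subset_span (Or.inr ⟨_, _, hlt, rfl⟩))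
      rw [SetLike.mem_coe, Equiv.swap_comm, Equiv.comp_swap_eq_update]
      rwa [map_add, map_smul, embedPair_single (hne hab), embedPair_single (hne hab),
        update_eq_self, update_eq_self] at this

noncomputable def singleSorted (t : {t : Finset (Fin n) // #t = k}) : (Fin k → Fin n) → ℂ :=
  Pi.single (t.1.orderEmbOfFin t.2 : Fin k → Fin n) 1

lemma single_mem_span_singleSorted_sup_Wk {s : ℂ} (hs : s ≠ 0) (f : Fin k → Fin n) :
    Pi.single f 1 ∈ Submodule.span ℂ (Set.range singleSorted) ⊔ Wk n s k := by
  induction hN : #(inversions f) using Nat.strong_induction_on generalizing f with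
  | _ N ih =>
  by_cases hmono : StrictMono f
  · refine Submodule.mem_sup_left (Submodule.subset_span ⟨⟨univ.image f, ?_⟩, ?_⟩)
    · rw [card_image_of_injective _ hmono.injective, card_univ, Fintype.card_fin]
    · rw [singleSorted,
        ← orderEmbOfFin_unique _ (fun x => mem_image_of_mem f (mem_univ x)) hmono]
  obtain ⟨a, b, hab, hba⟩ := exists_adjacent_le_of_not_strictMono hmono
  rcases hba.eq_or_lt with heq | hlt
  · refine Submodule.mem_sup_right ?_
    rw [Wk_eq_span]
    exact Submodule.subset_span (Or.inl ⟨f, a, b, hab, heq.symm, rfl⟩)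
  set f' := f ∘ Equiv.swap a b
  have hf' : f' ∘ Equiv.swap a b = f := by ext; simp [f']
  have hlt' : f' a < f' b := by simpa [f'] using hlt
  have hinv : #(inversions f) = #(inversions f') + 1 := by
    rw [← hf']
    exact card_inversions_comp_swap f' hab hlt'
  have hgen : Pi.single f' 1 + s • Pi.single f 1 ∈ Wk n s k := by
    rw [Wk_eq_span]
    exact Submodule.subset_span (Or.inr ⟨f', a, b, hab, hlt', by rw [hf']⟩)
  have hrec := ih _ (by omega) f' rfl
  have hsingle : Pi.single f (1 : ℂ) =
      s⁻¹ • ((Pi.single f' 1 + s • Pi.single f 1) - Pi.single f' 1) := by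
    rw [add_sub_cancel_left, smul_smul, inv_mul_cancel₀ hs, one_smul]
  rw [hsingle]
  exact Submodule.smul_mem _ _ (Submodule.sub_mem _ (Submodule.mem_sup_right hgen) hrec)

lemma span_singleSorted_sup_Wk {s : ℂ} (hs : s ≠ 0) :
    Submodule.span ℂ (Set.range singleSorted) ⊔ Wk n s k = ⊤ := by
  rw [eq_top_iff, ← (Pi.basisFun ℂ (Fin k → Fin n)).span_eq, Submodule.span_le]
  rintro _ ⟨f, rfl⟩
  exact Pi.basisFun_apply ℂ _ f ▸ single_mem_span_singleSorted_sup_Wk hs f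

open Classical in
noncomputable def dualCoeff (s : ℂ) (t : Finset (Fin n)) (f : Fin k → Fin n) : ℂ :=
  if Injective f ∧ Set.range f = t then (-s⁻¹) ^ #(inversions f) else 0

noncomputable def dualFunctional (s : ℂ) (t : Finset (Fin n)) :
    ((Fin k → Fin n) → ℂ) →ₗ[ℂ] ℂ :=
  (Pi.basisFun ℂ (Fin k → Fin n)).constr ℂ (dualCoeff s t)

lemma dualFunctional_single (s : ℂ) (t : Finset (Fin n)) (f : Fin k → Fin n) :
    dualFunctional s t (Pi.single f 1) = dualCoeff s t f := by
  rw [dualFunctional, ← Pi.basisFun_apply, Module.Basis.constr_basis]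

lemma dualCoeff_comp_swap_of_adjacent {s : ℂ} (hs : s ≠ 0) (t : Finset (Fin n))
    {f : Fin k → Fin n} {a b : Fin k} (hab : (b : ℕ) = a + 1) (hf : f a < f b) :
    dualCoeff s t f + s * dualCoeff s t (f ∘ Equiv.swap a b) = 0 := by
  simp only [dualCoeff, EquivLike.injective_comp, EquivLike.range_comp,
    card_inversions_comp_swap f hab hf]
  split_ifs
  · rw [pow_succ, show s * ((-s⁻¹) ^ #(inversions f) * -s⁻¹) =
      -(s * s⁻¹) * (-s⁻¹) ^ #(inversions f) by ring, mul_inv_cancel₀ hs]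
    ring
  · simp

lemma Wk_le_ker_dualFunctional {s : ℂ} (hs : s ≠ 0) (t : Finset (Fin n)) :
    Wk n s k ≤ LinearMap.ker (dualFunctional s t) := by
  rw [Wk_eq_span, Submodule.span_le]
  rintro _ (⟨f, a, b, hab, heq, rfl⟩ | ⟨f, a, b, hab, hlt, rfl⟩)
  · have hne : a ≠ b := by simp [← Fin.val_inj, hab]
    rw [SetLike.mem_coe, LinearMap.mem_ker, dualFunctional_single, dualCoeff, if_neg]
    exact fun h => hne (h.1 heq)
  · simp [dualFunctional_single, dualCoeff_comp_swap_of_adjacent hs t hab hlt]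

lemma dualCoeff_orderEmbOfFin (s : ℂ) (t t' : Finset (Fin n)) (h : #t' = k) :
    dualCoeff s t (t'.orderEmbOfFin h) = if t' = t then 1 else 0 := by
  simp [dualCoeff, (t'.orderEmbOfFin h).injective, range_orderEmbOfFin,
    inversions_eq_empty (t'.orderEmbOfFin h).strictMono]

end QuotientBasis

theorem finrank_quotient_Wk_general (n : ℕ) (s : ℂ) (hs : s ≠ 0) (k : ℕ) :
    Module.finrank ℂ (((Fin k → Fin n) → ℂ) ⧸ Wk n s k) = Nat.choose n k := by
  let v := (Wk n s k).mkQ ∘ singleSorted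
  let L := LinearMap.pi fun t : {t : Finset (Fin n) // #t = k} =>
    (Wk n s k).liftQ (dualFunctional s t.1) (Wk_le_ker_dualFunctional hs t.1)
  have hLv : ⇑L ∘ v = Pi.basisFun ℂ _ := by
    funext t t'
    simp [v, L, singleSorted, dualFunctional_single, dualCoeff_orderEmbOfFin, Pi.single_apply,
      Subtype.ext_iff, eq_comm]
  have hli : LinearIndependent ℂ v :=
    LinearIndependent.of_comp L (hLv ▸ (Pi.basisFun ℂ _).linearIndependent)
  have hsp : ⊤ ≤ Submodule.span ℂ (Set.range v) := by
    rw [Set.range_comp, ← Submodule.map_span, top_le_iff, Submodule.map_mkQ_eq_top, sup_comm,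
      span_singleSorted_sup_Wk hs]
  rw [Module.finrank_eq_card_basis (Module.Basis.mk hli hsp), Fintype.card_finset_len,
    Fintype.card_fin]

/-- **Dimension of the `k`-th fundamental module.** If `r s⁻¹` is not a root of unity,
then for every `k ≥ 2` the quotient `V^{⊗k}/W_k` has dimension `C(n, k)`. -/
theorem finrank_quotient_Wk (n : ℕ) (hn : 1 ≤ n) (r s : ℂ) (hr : r ≠ 0) (hs : s ≠ 0)
    (hroot : ∀ t : ℕ, 1 ≤ t → (r * s⁻¹) ^ t ≠ 1) (k : ℕ) (hk : 2 ≤ k) :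
    Module.finrank ℂ (((Fin k → Fin n) → ℂ) ⧸ Wk n s k) = Nat.choose n k :=
  finrank_quotient_Wk_general n s hs k
end
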